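/- Let k ≥ 2, and let H be a graph on d vertices with d ≥ (5k-2)/2 that is kK_2-free and has at least (k-2)d + k + 2 edges. Then H contains a matching of size k - 1. -/

import Mathlib

open Matrix

noncomputable section
open scoped Classical

/-- The complete split graph `S_{n,k} = K_k ∇ (n-k)K_1`. -/
def splitGraph (n k : ℕ) : SimpleGraph (Fin n) where
  Adj i j := i ≠ j ∧ (i.val < k ∨ j.val < k)
  symm := ⟨fun i j h => ⟨h.1.symm, h.2.symm⟩⟩
  loopless := ⟨fun i h => h.1 rfl⟩

/-- The graph `K_m ∪ (n-m)K_1`: a clique on the first `m` vertices plus isolated vertices. -/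
def cliqueUnion (n m : ℕ) : SimpleGraph (Fin n) where
  Adj i j := i ≠ j ∧ i.val < m ∧ j.val < m
  symm := ⟨fun i j h => ⟨h.1.symm, h.2.2, h.2.1⟩⟩
  loopless := ⟨fun i h => h.1 rfl⟩

/-- The `k`-fan `F_k = K_1 ∇ kK_2`: vertex `0` is the common center, and for `m < k` the
vertices `2m+1, 2m+2` form the `m`-th edge of the matching joined to the center. -/
def fan (k : ℕ) : SimpleGraph (Fin (2 * k + 1)) where
  Adj i j := i ≠ j ∧ (i = 0 ∨ j = 0 ∨ (i.val - 1) / 2 = (j.val - 1) / 2)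
  symm := by
    constructor
    rintro i j ⟨h1, h2⟩
    refine ⟨h1.symm, ?_⟩
    rcases h2 with h | h | h
    · exact Or.inr (Or.inl h)
    · exact Or.inl h
    · exact Or.inr (Or.inr h.symm)
  loopless := ⟨fun i h => h.1 rfl⟩

/-- `G` contains a (not necessarily induced) subgraph isomorphic to `H`. -/
def ContainsSub {V W : Type*} (G : SimpleGraph V) (H : SimpleGraph W) : Prop :=
  ∃ f : W → V, Function.Injective f ∧ ∀ a b, H.Adj a b → G.Adj (f a) (f b)

/-- `G` is `F_k`-free. -/
def FanFree {V : Type*} (G : SimpleGraph V) (k : ℕ) : Prop := ¬ ContainsSub G (fan k)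

/-- `G` contains `k` pairwise disjoint edges. -/
def HasMatching {V : Type*} (G : SimpleGraph V) (k : ℕ) : Prop :=
  ∃ p : Fin k → V × V, (∀ i, G.Adj (p i).1 (p i).2) ∧
    ∀ i j, i ≠ j → (p i).1 ≠ (p j).1 ∧ (p i).1 ≠ (p j).2 ∧
      (p i).2 ≠ (p j).1 ∧ (p i).2 ≠ (p j).2

/-- The signless Laplacian matrix `Q(G) = D(G) + A(G)`. -/
def signlessLaplacian {V : Type*} [Fintype V] (G : SimpleGraph V) : Matrix V V ℝ :=
  Matrix.of fun i j =>
    (if i = j then ((G.neighborSet i).ncard : ℝ) else 0) + (if G.Adj i j then 1 else 0)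

/-- The signless Laplacian spectral radius `q_1(G)`: the largest eigenvalue of `Q(G)`. -/
def q1 {V : Type*} [Fintype V] (G : SimpleGraph V) : ℝ :=
  sSup (spectrum ℝ (signlessLaplacian G))

/-- The largest eigenvalue of a real matrix. -/
def lam1 {m : Type*} [Fintype m] [DecidableEq m] (M : Matrix m m ℝ) : ℝ :=
  sSup (spectrum ℝ M)

/-!
Let a maximum matching have `m` edges and cover the vertex set `S`, and let `n = |V|`. Every
edge meets `S`. For a matching edge `ab`, the neighbours of `a` and of `b` outside `S` have at
most one vertex in common, since two common outside neighbours `x ≠ y` would let `ax, by`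
replace `ab`; hence `a` and `b` have at most `n - 2m + 1` outside neighbours together.
Counting edge ends, `2e ≤ 2m (2m - 1) + 2m (n - 2m + 1) = 2mn`. So a graph without `k - 1`
disjoint edges has at most `(k - 2) n` edges, fewer than `(k - 2) n + k + 2`.
-/

open Finset

namespace SimpleGraph

variable {V : Type*} {G : SimpleGraph V} {m : ℕ}

section VertexCover

variable [Fintype V] [DecidableEq V] [DecidableRel G.Adj]

theorem degree_eq_card_filter_adj_add_card_filter_adj_compl (S : Finset V) (v : V) :
    G.degree v = #{w ∈ S | G.Adj v w} + #{w ∈ Sᶜ | G.Adj v w} := by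
  rw [← card_neighborFinset_eq_degree, neighborFinset_eq_filter, ← union_compl S, filter_union,
    card_union_of_disjoint (disjoint_filter_filter disjoint_compl_right)]

theorem IsVertexCover.two_mul_card_edgeFinset {S : Finset V} (hS : G.IsVertexCover S) :
    2 * #G.edgeFinset = ∑ v ∈ S, (#{w ∈ S | G.Adj v w} + 2 * #{w ∈ Sᶜ | G.Adj v w}) := by
  have hcompl : ∀ v ∈ Sᶜ, G.degree v = #{w ∈ S | G.Adj v w} := fun v hv => by
    rw [degree_eq_card_filter_adj_add_card_filter_adj_compl S, add_eq_left, card_eq_zero,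
      filter_eq_empty_iff]
    exact fun w hw hvw => (hS hvw).elim (mem_compl.1 hv) (mem_compl.1 hw)
  have hcross : ∑ v ∈ Sᶜ, #{w ∈ S | G.Adj v w} = ∑ v ∈ S, #{w ∈ Sᶜ | G.Adj v w} := by
    refine (sum_card_bipartiteAbove_eq_sum_card_bipartiteBelow G.Adj).trans ?_
    simp only [bipartiteBelow, adj_comm]
  rw [← sum_degrees_eq_twice_card_edges, ← sum_add_sum_compl S, sum_congr rfl hcompl, hcross,
    ← sum_add_distrib]
  refine sum_congr rfl fun v _ => ?_
  rw [degree_eq_card_filter_adj_add_card_filter_adj_compl S]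
  ring

end VertexCover

theorem hasMatching_zero (G : SimpleGraph V) : HasMatching G 0 :=
  ⟨Fin.elim0, fun i => i.elim0, fun i => i.elim0⟩

-- `f (i, false)` and `f (i, true)` are the ends of the `i`-th edge; injectivity makes the edges
-- pairwise disjoint.
def IsMatchingMap (G : SimpleGraph V) (f : Fin m × Bool → V) : Prop :=
  Function.Injective f ∧ ∀ i, G.Adj (f (i, false)) (f (i, true))

theorem hasMatching_iff_exists_isMatchingMap :
    HasMatching G m ↔ ∃ f : Fin m × Bool → V, G.IsMatchingMap f := by
  constructor
  · rintro ⟨p, hadj, hdisj⟩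
    refine ⟨fun x => if x.2 then (p x.1).2 else (p x.1).1, ?_, fun i => by simpa using hadj i⟩
    rintro ⟨i, b⟩ ⟨j, c⟩ h
    by_cases hij : i = j
    · subst hij
      have := (hadj i).ne
      cases b <;> cases c <;> simp_all [eq_comm]
    · have := hdisj i j hij
      cases b <;> cases c <;> simp_all
  · rintro ⟨f, hinj, hadj⟩
    refine ⟨fun i => (f (i, false), f (i, true)), hadj, fun i j hij => ?_⟩
    simp [hinj.eq_iff, hij]

namespace IsMatchingMap

variable {f : Fin m × Bool → V}

theorem hasMatching (hf : G.IsMatchingMap f) : HasMatching G m :=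
  hasMatching_iff_exists_isMatchingMap.2 ⟨f, hf⟩

theorem snoc (hf : G.IsMatchingMap f) {u v : V} (huv : G.Adj u v)
    (hu : u ∉ Set.range f) (hv : v ∉ Set.range f) :
    G.IsMatchingMap fun x : Fin (m + 1) × Bool =>
      Fin.lastCases (motive := fun _ => V) (if x.2 then v else u) (fun j => f (j, x.2)) x.1 := by
  refine ⟨?_, fun i => ?_⟩
  · rintro ⟨i, b⟩ ⟨j, c⟩ h
    induction i using Fin.lastCases <;> induction j using Fin.lastCases <;>
      cases b <;> cases c <;> simp_all [huv.ne, huv.ne', hf.1.eq_iff]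
  · induction i using Fin.lastCases <;> simp [huv, hf.2]

theorem update (hf : G.IsMatchingMap f) (i : Fin m) {x : V} (hx : x ∉ Set.range f)
    (hadj : G.Adj (f (i, false)) x) : G.IsMatchingMap (Function.update f (i, true) x) := by
  refine ⟨fun a b h => ?_, fun j => ?_⟩
  · have hx' (c) : f c ≠ x := fun hc => hx ⟨c, hc⟩
    by_cases ha : a = (i, true) <;> by_cases hb : b = (i, true) <;>
      simp only [ha, hb, Function.update_self, Function.update_of_ne, ne_eq,
        not_false_eq_true] at h
    · exact ha.trans hb.symm
    · exact absurd h.symm (hx' b)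
    · exact absurd h (hx' a)
    · exact hf.1 h
  · by_cases hj : j = i
    · subst hj; simpa
    · simpa [hj] using hf.2 j

theorem hasMatching_succ_of_adj_of_adj (hf : G.IsMatchingMap f) (i : Fin m) {x y : V}
    (hx : x ∉ Set.range f) (hy : y ∉ Set.range f) (hxy : x ≠ y)
    (hax : G.Adj (f (i, false)) x) (hby : G.Adj (f (i, true)) y) : HasMatching G (m + 1) := by
  have hx' (c) : f c ≠ x := fun hc => hx ⟨c, hc⟩
  have hy' (c) : f c ≠ y := fun hc => hy ⟨c, hc⟩
  refine ((hf.update i hx hax).snoc hby ?_ ?_).hasMatching <;> rintro ⟨a, ha⟩ <;>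
    by_cases hai : a = (i, true) <;>
    simp only [hai, Function.update_self, Function.update_of_ne, ne_eq, not_false_eq_true] at ha
  · exact hx' _ ha.symm
  · exact hai (hf.1 ha)
  · exact hxy ha
  · exact hy' a ha

theorem isVertexCover_range (hf : G.IsMatchingMap f) (hmax : ¬HasMatching G (m + 1)) :
    G.IsVertexCover (Set.range f) := fun u v huv => by
  by_contra! h
  exact hmax (hf.snoc huv h.1 h.2).hasMatching

variable [Fintype V] [DecidableEq V] [DecidableRel G.Adj]

theorem card_filter_adj_add_card_filter_adj_le (hf : G.IsMatchingMap f)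
    (hmax : ¬HasMatching G (m + 1)) (i : Fin m) :
    #{w ∈ (univ.image f)ᶜ | G.Adj (f (i, false)) w} +
      #{w ∈ (univ.image f)ᶜ | G.Adj (f (i, true)) w} ≤ #(univ.image f)ᶜ + 1 := by
  rw [← card_union_add_card_inter]
  gcongr
  · exact union_subset (filter_subset ..) (filter_subset ..)
  · refine card_le_one.2 fun x hx y hy => ?_
    by_contra hxy
    simp only [mem_inter, mem_filter, mem_compl, mem_image, mem_univ, true_and,
      not_exists] at hx hy
    exact hmax (hf.hasMatching_succ_of_adj_of_adj i (fun ⟨a, ha⟩ => hx.1.1 a ha)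
      (fun ⟨a, ha⟩ => hy.1.1 a ha) hxy hx.1.2 hy.2.2)

theorem card_edgeFinset_le (hf : G.IsMatchingMap f) (hmax : ¬HasMatching G (m + 1)) :
    #G.edgeFinset ≤ m * Fintype.card V := by
  set S := univ.image f with hSdef
  have hS : #S = 2 * m := by rw [card_image_of_injective _ hf.1]; simp [mul_comm]
  have hcover : G.IsVertexCover S := by simpa [hSdef] using hf.isVertexCover_range hmax
  have hinside : ∑ v ∈ S, #{w ∈ S | G.Adj v w} ≤ #S * (#S - 1) := by
    refine (sum_le_card_nsmul _ _ _ fun v hv => ?_).trans_eq (smul_eq_mul _ _)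
    rw [← card_erase_of_mem hv]
    exact card_le_card fun w hw => mem_erase.2 ⟨(mem_filter.1 hw).2.ne', (mem_filter.1 hw).1⟩
  have houtside : ∑ v ∈ S, #{w ∈ Sᶜ | G.Adj v w} ≤ m * (#Sᶜ + 1) := by
    rw [hSdef, sum_image fun a _ b _ h => hf.1 h, Fintype.sum_prod_type]
    simp only [Fintype.sum_bool]
    calc _ ≤ ∑ _i : Fin m, (#Sᶜ + 1) := sum_le_sum fun i _ =>
            (add_comm _ _).le.trans (hf.card_filter_adj_add_card_filter_adj_le hmax i)
      _ = m * (#Sᶜ + 1) := by simp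
  have hV : 2 * m + #Sᶜ = Fintype.card V := hS ▸ card_add_card_compl S
  have hcount : 2 * #G.edgeFinset ≤ 2 * (m * Fintype.card V) := calc
    2 * #G.edgeFinset
      = ∑ v ∈ S, #{w ∈ S | G.Adj v w} + 2 * ∑ v ∈ S, #{w ∈ Sᶜ | G.Adj v w} := by
        rw [hcover.two_mul_card_edgeFinset, sum_add_distrib, mul_sum]
    _ ≤ 2 * m * (2 * m - 1) + 2 * (m * (#Sᶜ + 1)) :=
        hS ▸ add_le_add hinside (Nat.mul_le_mul_left 2 houtside)
    _ = 2 * (m * Fintype.card V) := by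
      rw [← hV]
      rcases m with _ | m
      · simp
      · rw [show 2 * (m + 1) - 1 = 2 * m + 1 by omega]
        ring
  omega

end IsMatchingMap

theorem card_edgeFinset_le_of_not_hasMatching [Fintype V] [DecidableEq V] [DecidableRel G.Adj]
    (h : ¬HasMatching G (m + 1)) : #G.edgeFinset ≤ m * Fintype.card V := by
  set m₀ := Nat.findGreatest (HasMatching G) m
  have hm₀ : m₀ ≤ m := Nat.findGreatest_le m
  obtain ⟨f, hf⟩ := hasMatching_iff_exists_isMatchingMap.1 <|
    Nat.findGreatest_spec (P := HasMatching G) (Nat.zero_le m) (hasMatching_zero G)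
  have hmax : ¬HasMatching G (m₀ + 1) := by
    rcases hm₀.lt_or_eq with hlt | heq
    · exact Nat.findGreatest_is_greatest (Nat.lt_succ_self _) hlt
    · rwa [show m₀ = m from heq]
  exact (hf.card_edgeFinset_le hmax).trans (Nat.mul_le_mul_right _ hm₀)

end SimpleGraph

theorem stmt15_general {d k : ℕ} (hk : 2 ≤ k)
    (H : SimpleGraph (Fin d))
    (hcard : (k - 2) * d + k + 2 ≤ H.edgeSet.ncard) :
    HasMatching H (k - 1) := by
  by_contra h
  have hle := SimpleGraph.card_edgeFinset_le_of_not_hasMatching (m := k - 2)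
    (by rwa [show k - 2 + 1 = k - 1 by omega])
  rw [Fintype.card_fin] at hle
  rw [← SimpleGraph.coe_edgeFinset, Set.ncard_coe_finset] at hcard
  omega

/-- if `k ≥ 2`, `H` has `d ≥ (5k-2)/2` vertices, is `kK₂`-free and has at
least `(k-2)d + k + 2` edges, then `H` contains a matching of size `k - 1`. -/
theorem stmt15 {d k : ℕ} (hk : 2 ≤ k) (hd : 5 * k - 2 ≤ 2 * d)
    (H : SimpleGraph (Fin d)) (hfree : ¬ HasMatching H k)
    (hcard : (k - 2) * d + k + 2 ≤ H.edgeSet.ncard) :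
    HasMatching H (k - 1) :=
  stmt15_general hk H hcard
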